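/- For all p₁, p₂, p₃ each equal to 0 or belonging to [1, ∞), and every h₀ with 0 < h₀ < 1/(s·c·c₃), there exists a constant c₇ > 0, depending only on p₁, p₂, p₃, s, c₃, c, m and h₀, such that: for every probability space, every drift function a, every matrix A⁽⁰⁾ and vector c⁽⁰⁾ with entries of absolute value at most c₃, every h ∈ (0, h₀), every t ∈ ℝ, every random data (G₁, …, G_m, Z) with E‖Z‖^{p₃} < ∞, every family of measurable random vectors H⁽⁰⁾₁, …, H⁽⁰⁾_s that almost surely form drift stage values with data (Z, t, h), and all indices j₁, j₂, j₃ ∈ {1, …, m}: E[ |G_{j₁}|^{p₁} · |ξ̂_{j₂,j₃}|^{p₂} · max_{1≤i≤s} ‖H⁽⁰⁾_i‖^{p₃} ] ≤ c₇ · (1 + E‖Z‖^{p₃}) · h^{p₁/2 + p₂} (a factor with exponent 0 is taken to be 1). (Lemma 6.7 in the commutative-noise form with ξ̂ = I^C or J^C, as asserted in Sections 6.5 and 6.6.) -/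

import Mathlib

/-!
Write `G_k = √h N_k` with `N_k` standard Gaussian. Since `|ξ̂_{j₂j₃}| ≤ h (|N_{j₂} N_{j₃}| + 1) / 2`,
the noise factor `|G_{j₁}|^{p₁} |ξ̂_{j₂j₃}|^{p₂}` is at most `h^{p₁/2+p₂}` times
`1 + |N_{j₁}|^r + |N_{j₂}|^r + |N_{j₃}|^r` with `r = p₁ + 2p₂`, whose mean `1 + 3 E|N|^r` does not
depend on `h`. With `q = h₀ s c c₃ < 1`, the stage equations give `(1 - q) max_i ‖H_i‖ ≤ ‖Z‖ + q`,
so the stage factor is at most `((1+q)/(1-q))^{p₃} (1 + ‖Z‖^{p₃})`, a function of `Z` alone.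
Independence of `Z` from the increments splits the expectation of the product.
-/

open MeasureTheory ProbabilityTheory
open scoped NNReal

theorem max_rpow_le_add {x y p : ℝ} (hx : 0 ≤ x) (hy : 0 ≤ y) (hp : 0 ≤ p) :
    max x y ^ p ≤ x ^ p + y ^ p := by
  rw [Real.rpow_max hx hy hp]
  exact max_le_add_of_nonneg (by positivity) (by positivity)

theorem abs_rpow_mul_abs_mul_div_two_sub_rpow_le {x y z δ p q : ℝ} (hδ : |δ| ≤ 1 / 2)
    (hp : 0 ≤ p) (hq : 0 ≤ q) :
    |x| ^ p * |y * z / 2 - δ| ^ q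
      ≤ 1 + |x| ^ (p + 2 * q) + |y| ^ (p + 2 * q) + |z| ^ (p + 2 * q) := by
  set w := max (max (max 1 |x|) |y|) |z|
  have hw : 1 ≤ w := le_max_of_le_left (le_max_of_le_left (le_max_left _ _))
  have hxw : |x| ≤ w := le_max_of_le_left (le_max_of_le_left (le_max_right _ _))
  have hyw : |y| ≤ w := le_max_of_le_left (le_max_right _ _)
  have hzw : |z| ≤ w := le_max_right _ _
  have hξ : |y * z / 2 - δ| ≤ w ^ (2 : ℝ) := calc
    |y * z / 2 - δ| ≤ |y| * |z| / 2 + 1 / 2 := by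
      rw [← abs_mul, ← abs_two, ← abs_div]
      exact (abs_sub _ _).trans (by rw [abs_two]; linarith)
    _ ≤ w ^ (2 : ℝ) := by
      rw [Real.rpow_two]
      nlinarith [mul_le_mul hyw hzw (abs_nonneg _) (by linarith)]
  have hr : 0 ≤ p + 2 * q := by positivity
  calc |x| ^ p * |y * z / 2 - δ| ^ q ≤ w ^ p * (w ^ (2 : ℝ)) ^ q := by gcongr
    _ = w ^ (p + 2 * q) := by
      rw [← Real.rpow_mul (by linarith), ← Real.rpow_add (by linarith)]
    _ ≤ 1 + |x| ^ (p + 2 * q) + |y| ^ (p + 2 * q) + |z| ^ (p + 2 * q) := by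
      refine (max_rpow_le_add (by positivity) (abs_nonneg _) hr).trans ?_
      gcongr
      refine (max_rpow_le_add (by positivity) (abs_nonneg _) hr).trans ?_
      gcongr
      refine (max_rpow_le_add zero_le_one (abs_nonneg _) hr).trans ?_
      rw [Real.one_rpow]

theorem abs_rpow_mul_abs_mul_div_two_sub_rpow_le_of_scale {x y z δ h p q : ℝ} (hh : 0 < h)
    (hδ : |δ| ≤ h / 2) (hp : 0 ≤ p) (hq : 0 ≤ q) :
    |x| ^ p * |y * z / 2 - δ| ^ q ≤ h ^ (p / 2 + q) *
      (1 + |x / √h| ^ (p + 2 * q) + |y / √h| ^ (p + 2 * q) + |z / √h| ^ (p + 2 * q)) := by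
  have hs : 0 < √h := Real.sqrt_pos.mpr hh
  have hδ' : |δ / h| ≤ 1 / 2 := by
    rw [abs_div, abs_of_pos hh, div_le_iff₀ hh]
    linarith
  have hx : |x| ^ p = h ^ (p / 2) * |x / √h| ^ p := by
    rw [abs_div, abs_of_pos hs, Real.div_rpow (abs_nonneg _) hs.le, Real.sqrt_eq_rpow,
      ← Real.rpow_mul hh.le, one_div_mul_eq_div]
    field_simp
  have hξ : |y * z / 2 - δ| ^ q = h ^ q * |y / √h * (z / √h) / 2 - δ / h| ^ q := by
    rw [← Real.mul_rpow hh.le (abs_nonneg _), ← abs_of_pos hh, ← abs_mul, abs_of_pos hh]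
    congr 2
    field_simp
    rw [Real.sq_sqrt hh.le]
    ring
  rw [hx, hξ, Real.rpow_add hh]
  calc h ^ (p / 2) * |x / √h| ^ p * (h ^ q * |y / √h * (z / √h) / 2 - δ / h| ^ q)
      = h ^ (p / 2) * h ^ q * (|x / √h| ^ p * |y / √h * (z / √h) / 2 - δ / h| ^ q) := by ring
    _ ≤ _ := by gcongr; exact abs_rpow_mul_abs_mul_div_two_sub_rpow_le hδ' hp hq

theorem rpow_le_of_le_add_div_one_sub {x z q p : ℝ} (hx : 0 ≤ x) (hz : 0 ≤ z) (hq₀ : 0 ≤ q)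
    (hq₁ : q < 1) (hp : 0 ≤ p) (hxz : x ≤ (z + q) / (1 - q)) :
    x ^ p ≤ ((1 + q) / (1 - q)) ^ p * (1 + z ^ p) := by
  have hK : 0 ≤ (1 + q) / (1 - q) := div_nonneg (by linarith) (by linarith)
  have hmax : x ≤ (1 + q) / (1 - q) * max 1 z := by
    refine hxz.trans ?_
    rw [div_mul_eq_mul_div]
    gcongr
    nlinarith [le_max_left 1 z, le_max_right 1 z]
  calc x ^ p ≤ ((1 + q) / (1 - q) * max 1 z) ^ p := by gcongr
    _ = ((1 + q) / (1 - q)) ^ p * max 1 z ^ p := Real.mul_rpow hK (by positivity)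
    _ ≤ ((1 + q) / (1 - q)) ^ p * (1 + z ^ p) := by
      gcongr
      simpa using max_rpow_le_add zero_le_one hz hp

section StageBound

variable {ι E : Type*} [Fintype ι] [NormedAddCommGroup E] [NormedSpace ℝ E]
  {b : ι → E → E} {A : ι → ι → ℝ} {c c₃ h q : ℝ} {z : E} {H : ι → E}

theorem norm_le_of_eq_add_smul_sum (hc : 0 ≤ c) (hc₃ : 0 ≤ c₃) (hh : 0 ≤ h)
    (hb : ∀ j x, ‖b j x‖ ≤ c * (1 + ‖x‖)) (hA : ∀ i j, |A i j| ≤ c₃)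
    (hq : h * Fintype.card ι * c * c₃ ≤ q) (hq₁ : q < 1)
    (hH : ∀ i, H i = z + h • ∑ j, A i j • b j (H j)) (i : ι) :
    ‖H i‖ ≤ (‖z‖ + q) / (1 - q) := by
  have : Nonempty ι := ⟨i⟩
  obtain ⟨i₀, hi₀⟩ := Finite.exists_max fun j => ‖H j‖
  set M := ‖H i₀‖
  have hterm : ∀ j, ‖A i₀ j • b j (H j)‖ ≤ c₃ * (c * (1 + M)) := fun j => by
    rw [norm_smul, Real.norm_eq_abs]
    exact mul_le_mul (hA i₀ j) ((hb j _).trans (by gcongr; exact hi₀ j)) (norm_nonneg _) hc₃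
  have hsum : ‖∑ j, A i₀ j • b j (H j)‖ ≤ Fintype.card ι * (c₃ * (c * (1 + M))) :=
    (norm_sum_le _ _).trans ((Finset.sum_le_sum fun j _ => hterm j).trans_eq (by simp))
  have hM : M ≤ ‖z‖ + q * (1 + M) := calc
    M = ‖z + h • ∑ j, A i₀ j • b j (H j)‖ := by rw [← hH]
    _ ≤ ‖z‖ + h * (Fintype.card ι * (c₃ * (c * (1 + M)))) := by
      refine (norm_add_le _ _).trans ?_
      rw [norm_smul, Real.norm_of_nonneg hh]
      gcongr
    _ = ‖z‖ + h * Fintype.card ι * c * c₃ * (1 + M) := by ring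
    _ ≤ ‖z‖ + q * (1 + M) := by gcongr
  rw [le_div_iff₀ (by linarith)]
  nlinarith [hi₀ i]

theorem iSup_norm_rpow_le_of_eq_add_smul_sum {p : ℝ} (hc : 0 ≤ c) (hc₃ : 0 ≤ c₃) (hh : 0 ≤ h)
    (hb : ∀ j x, ‖b j x‖ ≤ c * (1 + ‖x‖)) (hA : ∀ i j, |A i j| ≤ c₃)
    (hq : h * Fintype.card ι * c * c₃ ≤ q) (hq₀ : 0 ≤ q) (hq₁ : q < 1) (hp : 0 ≤ p)
    (hH : ∀ i, H i = z + h • ∑ j, A i j • b j (H j)) :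
    ⨆ i, ‖H i‖ ^ p ≤ ((1 + q) / (1 - q)) ^ p * (1 + ‖z‖ ^ p) :=
  Real.iSup_le (fun i => rpow_le_of_le_add_div_one_sub (norm_nonneg _) (norm_nonneg _) hq₀ hq₁
      hp (norm_le_of_eq_add_smul_sum hc hc₃ hh hb hA hq hq₁ hH i))
    (mul_nonneg (Real.rpow_nonneg (div_nonneg (by linarith) (by linarith)) _) (by positivity))

end StageBound

theorem integrable_abs_rpow_gaussianReal {r : ℝ} (hr : 0 ≤ r) (m : ℝ) (v : ℝ≥0) :
    Integrable (fun x => |x| ^ r) (gaussianReal m v) := by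
  have := (memLp_id_gaussianReal' (μ := m) (v := v) (.ofReal r) ENNReal.ofReal_ne_top
    ).integrable_norm_rpow'
  simpa [ENNReal.toReal_ofReal hr] using this

section Probability

variable {Ω : Type*} [MeasurableSpace Ω] {μ : Measure Ω}

theorem ProbabilityTheory.HasLaw.integrable_abs_rpow_of_gaussianReal {X : Ω → ℝ} {m : ℝ}
    {v : ℝ≥0} (hX : HasLaw X (gaussianReal m v) μ) {r : ℝ} (hr : 0 ≤ r) :
    Integrable (fun ω => |X ω| ^ r) μ := by
  have hf : Measurable fun x : ℝ => |x| ^ r := by fun_prop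
  refine (integrable_map_measure hf.aestronglyMeasurable hX.aemeasurable).mp ?_
  rw [hX.map_eq]
  exact integrable_abs_rpow_gaussianReal hr m v

theorem ProbabilityTheory.HasLaw.div_sqrt_gaussianReal {X : Ω → ℝ} {h : ℝ} (hh : 0 < h)
    (hX : HasLaw X (gaussianReal 0 h.toNNReal) μ) :
    HasLaw (fun ω => X ω / √h) (gaussianReal 0 1) μ := by
  convert gaussianReal_div_const hX √h using 2
  · simp
  · ext
    simp [Real.sq_sqrt hh.le, hh.le, hh.ne']

theorem ProbabilityTheory.HasLaw.integral_one_add_abs_rpow_add_add [IsProbabilityMeasure μ]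
    {ι : Type*} {N : ι → Ω → ℝ} (hN : ∀ k, HasLaw (N k) (gaussianReal 0 1) μ) {r : ℝ}
    (hr : 0 ≤ r) (i j k : ι) :
    ∫ ω, (1 + |N i ω| ^ r + |N j ω| ^ r + |N k ω| ^ r) ∂μ
      = 1 + 3 * ∫ x, |x| ^ r ∂gaussianReal 0 1 := by
  have hint : ∀ l, Integrable (fun ω => |N l ω| ^ r) μ := fun l =>
    (hN l).integrable_abs_rpow_of_gaussianReal hr
  have hmom : ∀ l, ∫ ω, |N l ω| ^ r ∂μ = ∫ x, |x| ^ r ∂gaussianReal 0 1 := fun l =>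
    (hN l).integral_comp (f := fun x => |x| ^ r) (by fun_prop)
  have hi : Integrable (fun ω => 1 + |N i ω| ^ r) μ := (integrable_const 1).add (hint i)
  have hij : Integrable (fun ω => 1 + |N i ω| ^ r + |N j ω| ^ r) μ := hi.add (hint j)
  rw [integral_add hij (hint k), integral_add hi (hint j),
    integral_add (integrable_const 1) (hint i), hmom, hmom, hmom]
  simp
  ring

theorem integral_le_mul_integral_of_indepFun {α β : Type*} [MeasurableSpace α]
    [MeasurableSpace β] {X : Ω → α} {Y : Ω → β} (hXY : IndepFun X Y μ) (hX : Measurable X)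
    (hY : Measurable Y) {f : α → ℝ} {g : β → ℝ} (hf : Measurable f) (hg : Measurable g)
    (hfX : Integrable (fun ω => f (X ω)) μ) (hgY : Integrable (fun ω => g (Y ω)) μ)
    {F : Ω → ℝ} (hF₀ : 0 ≤ᵐ[μ] F) (hF : ∀ᵐ ω ∂μ, F ω ≤ f (X ω) * g (Y ω)) :
    ∫ ω, F ω ∂μ ≤ (∫ ω, f (X ω) ∂μ) * ∫ ω, g (Y ω) ∂μ := by
  rw [← hXY.integral_fun_comp_mul_comp hX.aemeasurable hY.aemeasurable
    hf.aestronglyMeasurable hg.aestronglyMeasurable]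
  exact integral_mono_of_nonneg hF₀ ((hXY.comp hf hg).integrable_mul hfX hgY) hF

end Probability

theorem stmt_12_general (s m : ℕ)
    (c c₃ : ℝ) (hc : 0 < c) (hc₃ : 0 < c₃)
    (p₁ p₂ p₃ : ℝ) (hp₁ : p₁ = 0 ∨ 1 ≤ p₁) (hp₂ : p₂ = 0 ∨ 1 ≤ p₂) (hp₃ : p₃ = 0 ∨ 1 ≤ p₃)
    (h₀ : ℝ) (hh₀ : 0 < h₀) (hh₀' : h₀ < 1 / ((s : ℝ) * c * c₃)) :
    ∃ c₇ > (0 : ℝ),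
      ∀ (d : ℕ) (Ω : Type) [MeasurableSpace Ω] (μ : Measure Ω) [IsProbabilityMeasure μ]
        (a : ℝ → EuclideanSpace ℝ (Fin d) → EuclideanSpace ℝ (Fin d)),
        (∀ t x, ‖a t x‖ ≤ c * (1 + ‖x‖)) →
        ∀ (A0 : Fin s → Fin s → ℝ) (c0 : Fin s → ℝ),
          (∀ i j, |A0 i j| ≤ c₃) → (∀ j, |c0 j| ≤ c₃) →
        ∀ (h : ℝ), 0 < h → h < h₀ →
        ∀ (t : ℝ) (G : Fin m → Ω → ℝ) (Z : Ω → EuclideanSpace ℝ (Fin d)),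
          (∀ k, Measurable (G k)) → Measurable Z →
          iIndepFun G μ →
          (∀ k, Measure.map (G k) μ = gaussianReal 0 h.toNNReal) →
          IndepFun Z (fun ω (k : Fin m) => G k ω) μ →
          Integrable (fun ω => ‖Z ω‖ ^ p₃) μ →
        ∀ (ξ : Fin m → Fin m → Ω → ℝ),
          ((∀ r k ω, ξ r k ω = G r ω * G k ω / 2) ∨
            (∀ r k ω, ξ r k ω = G r ω * G k ω / 2 - if r = k then h / 2 else 0)) →
        ∀ (H0 : Fin s → Ω → EuclideanSpace ℝ (Fin d)),
          (∀ i, Measurable (H0 i)) →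
          (∀ᵐ ω ∂μ, ∀ i, H0 i ω = Z ω + h • ∑ j, A0 i j • a (t + c0 j * h) (H0 j ω)) →
        ∀ (j₁ j₂ j₃ : Fin m),
          ∫ ω, |G j₁ ω| ^ p₁ * |ξ j₂ j₃ ω| ^ p₂ * (⨆ i : Fin s, ‖H0 i ω‖ ^ p₃) ∂μ
            ≤ c₇ * (1 + ∫ ω, ‖Z ω‖ ^ p₃ ∂μ) * h ^ (p₁ / 2 + p₂) := by
  have hp₁' : 0 ≤ p₁ := by rcases hp₁ with hp | hp <;> linarith
  have hp₂' : 0 ≤ p₂ := by rcases hp₂ with hp | hp <;> linarith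
  have hp₃' : 0 ≤ p₃ := by rcases hp₃ with hp | hp <;> linarith
  have hsc : 0 < (s : ℝ) * c * c₃ := one_div_pos.mp (hh₀.trans hh₀')
  set q := h₀ * ((s : ℝ) * c * c₃)
  have hq₁ : q < 1 := (lt_div_iff₀ hsc).mp hh₀'
  set K := ((1 + q) / (1 - q)) ^ p₃
  set r := p₁ + 2 * p₂
  set κ := ∫ x, |x| ^ r ∂gaussianReal 0 1
  have hK : 0 < K := Real.rpow_pos_of_pos (div_pos (by positivity) (by linarith)) _
  have hκ : 0 ≤ κ := integral_nonneg fun x => by positivity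
  refine ⟨K * (1 + 3 * κ), by positivity, ?_⟩
  intro d Ω _ μ _ a ha A0 c0 hA0 _ h hh hhh₀ t G Z hG hZ _ hGlaw hGZ hZp ξ hξ H0 _ hH0 j₁ j₂ j₃
  obtain ⟨δ, hδ, hξδ⟩ : ∃ δ, |δ| ≤ h / 2 ∧ ∀ ω, ξ j₂ j₃ ω = G j₂ ω * G j₃ ω / 2 - δ := by
    rcases hξ with hξ | hξ
    · exact ⟨0, by simp; linarith, fun ω => by simp [hξ]⟩
    · exact ⟨_, by split_ifs <;> rw [abs_le] <;> constructor <;> linarith, hξ j₂ j₃⟩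
  have hN : ∀ k, HasLaw (fun ω => G k ω / √h) (gaussianReal 0 1) μ := fun k =>
    HasLaw.div_sqrt_gaussianReal hh ⟨(hG k).aemeasurable, hGlaw k⟩
  have hNint := fun k => (hN k).integrable_abs_rpow_of_gaussianReal (r := r) (by positivity)
  have hq : h * Fintype.card (Fin s) * c * c₃ ≤ q := by
    rw [Fintype.card_fin]
    nlinarith
  calc ∫ ω, |G j₁ ω| ^ p₁ * |ξ j₂ j₃ ω| ^ p₂ * (⨆ i : Fin s, ‖H0 i ω‖ ^ p₃) ∂μ
      ≤ (∫ ω, h ^ (p₁ / 2 + p₂) * (1 + |G j₁ ω / √h| ^ r + |G j₂ ω / √h| ^ r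
          + |G j₃ ω / √h| ^ r) ∂μ) * ∫ ω, K * (1 + ‖Z ω‖ ^ p₃) ∂μ := by
        refine integral_le_mul_integral_of_indepFun hGZ.symm (measurable_pi_lambda _ hG) hZ
          (f := fun v => h ^ (p₁ / 2 + p₂) * (1 + |v j₁ / √h| ^ r + |v j₂ / √h| ^ r
            + |v j₃ / √h| ^ r)) (g := fun z => K * (1 + ‖z‖ ^ p₃)) (by fun_prop) (by fun_prop)
          (((((integrable_const 1).add (hNint j₁)).add (hNint j₂)).add (hNint j₃)).const_mul _)
          (((integrable_const 1).add hZp).const_mul K)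
          (Filter.Eventually.of_forall fun ω =>
            mul_nonneg (by positivity) (Real.iSup_nonneg fun i => by positivity)) ?_
        filter_upwards [hH0] with ω hω
        rw [hξδ]
        exact mul_le_mul (abs_rpow_mul_abs_mul_div_two_sub_rpow_le_of_scale hh hδ hp₁' hp₂')
          (iSup_norm_rpow_le_of_eq_add_smul_sum hc.le hc₃.le hh.le (fun j x => ha _ x) hA0 hq
            (mul_pos hh₀ hsc).le hq₁ hp₃' hω)
          (Real.iSup_nonneg fun i => by positivity) (by positivity)
    _ = K * (1 + 3 * κ) * (1 + ∫ ω, ‖Z ω‖ ^ p₃ ∂μ) * h ^ (p₁ / 2 + p₂) := by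
        rw [integral_const_mul, integral_const_mul, HasLaw.integral_one_add_abs_rpow_add_add hN
          (by positivity), integral_add (integrable_const 1) hZp]
        simp
        ring

/-- Lemma 6.7 (commutative-noise form with `ξ̂ = I^C` or `J^C`): mixed moment bound for
a Gaussian increment, a commutative-noise multiplier and the drift stages of the SRK
method, with a constant depending only on `p₁, p₂, p₃, s, c₃, c, m, h₀`. -/
theorem stmt_12 (s m : ℕ) (hs : 0 < s) (hm : 0 < m)
    (c c₃ : ℝ) (hc : 0 < c) (hc₃ : 0 < c₃)
    (p₁ p₂ p₃ : ℝ) (hp₁ : p₁ = 0 ∨ 1 ≤ p₁) (hp₂ : p₂ = 0 ∨ 1 ≤ p₂) (hp₃ : p₃ = 0 ∨ 1 ≤ p₃)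
    (h₀ : ℝ) (hh₀ : 0 < h₀) (hh₀' : h₀ < 1 / ((s : ℝ) * c * c₃)) :
    ∃ c₇ > (0 : ℝ),
      ∀ (d : ℕ) (Ω : Type) [MeasurableSpace Ω] (μ : Measure Ω) [IsProbabilityMeasure μ]
        (a : ℝ → EuclideanSpace ℝ (Fin d) → EuclideanSpace ℝ (Fin d)),
        (∀ t x, ‖a t x‖ ≤ c * (1 + ‖x‖)) →
        ∀ (A0 : Fin s → Fin s → ℝ) (c0 : Fin s → ℝ),
          (∀ i j, |A0 i j| ≤ c₃) → (∀ j, |c0 j| ≤ c₃) →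
        ∀ (h : ℝ), 0 < h → h < h₀ →
        ∀ (t : ℝ) (G : Fin m → Ω → ℝ) (Z : Ω → EuclideanSpace ℝ (Fin d)),
          (∀ k, Measurable (G k)) → Measurable Z →
          iIndepFun G μ →
          (∀ k, Measure.map (G k) μ = gaussianReal 0 h.toNNReal) →
          IndepFun Z (fun ω (k : Fin m) => G k ω) μ →
          Integrable (fun ω => ‖Z ω‖ ^ p₃) μ →
        ∀ (ξ : Fin m → Fin m → Ω → ℝ),
          ((∀ r k ω, ξ r k ω = G r ω * G k ω / 2) ∨
            (∀ r k ω, ξ r k ω = G r ω * G k ω / 2 - if r = k then h / 2 else 0)) →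
        ∀ (H0 : Fin s → Ω → EuclideanSpace ℝ (Fin d)),
          (∀ i, Measurable (H0 i)) →
          (∀ᵐ ω ∂μ, ∀ i, H0 i ω = Z ω + h • ∑ j, A0 i j • a (t + c0 j * h) (H0 j ω)) →
        ∀ (j₁ j₂ j₃ : Fin m),
          ∫ ω, |G j₁ ω| ^ p₁ * |ξ j₂ j₃ ω| ^ p₂ * (⨆ i : Fin s, ‖H0 i ω‖ ^ p₃) ∂μ
            ≤ c₇ * (1 + ∫ ω, ‖Z ω‖ ^ p₃ ∂μ) * h ^ (p₁ / 2 + p₂) :=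
  stmt_12_general s m c c₃ hc hc₃ p₁ p₂ p₃ hp₁ hp₂ hp₃ h₀ hh₀ hh₀'
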